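/- (McGarvey's theorem) For every asymmetric binary relation R (tournament) on a finite set of m alternatives, there exists an odd number n of voters with linear-order preferences on the alternatives such that for every pair (x,y), a strict majority of voters prefer x to y if and only if x R y. -/

import Mathlib

open Set

/-- A strict linear (total) order on the alternatives, used as an individual
preference relation. -/
def IsPref {m : ℕ} (r : Fin m → Fin m → Prop) : Prop :=
  (∀ x y, x ≠ y → (r x y ∨ r y x)) ∧ (∀ x y, r x y → ¬ r y x) ∧
    (∀ x, ¬ r x x) ∧ (∀ x y z, r x y → r y z → r x z)


/-!
For each pair `a R b` take two voters: one ranks `a`, `b` first and the other alternatives after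
them in index order, the other is the reverse of "`b`, `a`, then the rest". They agree on `a` over
`b` and disagree on every other pair, so together they give `x` over `y` two votes, none or one,
according as `(a, b)` is `(x, y)`, `(y, x)` or neither. With `N` such pairs and one more voter
ranking by index, `x` over `y` gets at least `N + 1` of the `2N + 1` votes if `x R y`, and at most
`N` otherwise.
-/

section

variable {m : ℕ}

def keyOrder (k : Fin m → ℤ) (x y : Fin m) : Prop := k x < k y

theorem isPref_keyOrder {k : Fin m → ℤ} (hk : Function.Injective k) : IsPref (keyOrder k) :=
  ⟨fun _ _ hxy => lt_or_gt_of_ne (hk.ne hxy), fun _ _ => lt_asymm, fun _ => lt_irrefl _,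
    fun _ _ _ => lt_trans⟩

def pairFirstKey (a b x : Fin m) : ℤ := if x = a then -2 else if x = b then -1 else x.val

theorem pairFirstKey_injective (a b : Fin m) : Function.Injective (pairFirstKey a b) := by
  intro x y h
  unfold pairFirstKey at h
  split_ifs at h <;> omega

theorem pairFirstKey_votes (p : Fin m × Fin m) {x y : Fin m} (hxy : x ≠ y) :
    ((if pairFirstKey p.1 p.2 x < pairFirstKey p.1 p.2 y then 1 else 0) +
        (if -pairFirstKey p.2 p.1 x < -pairFirstKey p.2 p.1 y then 1 else 0) +
        (if p = (y, x) then 1 else 0) : ℕ) =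
      1 + if p = (x, y) then 1 else 0 := by
  obtain ⟨a, b⟩ := p
  have hv : x.val ≠ y.val := Fin.val_ne_of_ne hxy
  unfold pairFirstKey
  split_ifs <;> simp_all <;> omega

def mcGarveyKey (R : Fin m → Fin m → Prop) :
    Option ({p : Fin m × Fin m // R p.1 p.2} × Bool) → Fin m → ℤ
  | none => fun x => x.val
  | some (p, true) => pairFirstKey p.1.1 p.1.2
  | some (p, false) => fun x => -pairFirstKey p.1.2 p.1.1 x

theorem mcGarveyKey_injective (R : Fin m → Fin m → Prop) :
    ∀ v, Function.Injective (mcGarveyKey R v)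
  | none => Nat.cast_injective.comp Fin.val_injective
  | some (_, true) => pairFirstKey_injective _ _
  | some (_, false) => neg_injective.comp (pairFirstKey_injective _ _)

theorem ncard_setOf_comp_equiv {ι κ : Type*} [Fintype κ] (e : ι ≃ κ) (p : κ → Prop)
    [DecidablePred p] : {i | p (e i)}.ncard = ∑ v, if p v then 1 else 0 := by
  rw [← Set.preimage_ofPred_eq,
    Set.ncard_preimage_of_injective_subset_range e.injective (by simp),
    Set.ncard_eq_toFinset_card', Set.toFinset_ofPred, Finset.card_filter]

theorem sum_subtype_ite_val_eq {α : Type*} [DecidableEq α] (P : α → Prop) [Fintype {a // P a}]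
    [DecidablePred P] (z : α) :
    (∑ p : {a // P a}, if p.1 = z then 1 else 0 : ℕ) = if P z then 1 else 0 := by
  by_cases hz : P z
  · rw [Fintype.sum_eq_single ⟨z, hz⟩ fun p hp => if_neg fun h => hp (Subtype.ext h)]
    simp [hz]
  · rw [if_neg hz]
    exact Finset.sum_eq_zero fun p _ => if_neg fun h : p.1 = z => hz (h ▸ p.2)

theorem mcGarveyKey_votes (R : Fin m → Fin m → Prop) [DecidableRel R] {x y : Fin m}
    (hxy : x ≠ y) :
    (∑ v, if mcGarveyKey R v x < mcGarveyKey R v y then 1 else 0) + (if R y x then 1 else 0) =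
      (if x < y then 1 else 0) + Fintype.card {p : Fin m × Fin m // R p.1 p.2} +
        if R x y then 1 else 0 := by
  have hz := sum_subtype_ite_val_eq (fun p : Fin m × Fin m => R p.1 p.2)
  have hgadget (p : {p : Fin m × Fin m // R p.1 p.2}) :
      (∑ b, if mcGarveyKey R (some (p, b)) x < mcGarveyKey R (some (p, b)) y then 1 else 0) +
          (if p.1 = (y, x) then 1 else 0) = 1 + if p.1 = (x, y) then 1 else 0 := by
    rw [Fintype.sum_bool]
    exact pairFirstKey_votes p.1 hxy
  rw [Fintype.sum_option, Fintype.sum_prod_type, add_assoc, ← hz (y, x), ← Finset.sum_add_distrib,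
    Finset.sum_congr rfl fun p _ => hgadget p, Finset.sum_add_distrib, hz]
  simp [mcGarveyKey, add_assoc]

end

/-- McGarvey's theorem: every tournament (asymmetric, total on distinct pairs)
on `m` alternatives is the strict pairwise majority relation of some profile of
linear orders for an odd number of voters. -/
theorem stmt_17 (m : ℕ) (R : Fin m → Fin m → Prop)
    (hasym : ∀ x y, R x y → ¬ R y x)
    (htotal : ∀ x y, x ≠ y → (R x y ∨ R y x)) :
    ∃ n : ℕ, Odd n ∧ ∃ π : Fin n → (Fin m → Fin m → Prop),
      (∀ i, IsPref (π i)) ∧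
      ∀ x y, (n < 2 * {i : Fin n | π i x y}.ncard ↔ R x y) := by
  classical
  set N := Fintype.card {p : Fin m × Fin m // R p.1 p.2}
  have hcard : Fintype.card (Option ({p : Fin m × Fin m // R p.1 p.2} × Bool)) = 2 * N + 1 := by
    simp [N, mul_comm]
  let e := (Fintype.equivFinOfCardEq hcard).symm
  refine ⟨2 * N + 1, odd_two_mul_add_one N, fun i => keyOrder (mcGarveyKey R (e i)),
    fun i => isPref_keyOrder (mcGarveyKey_injective R _), fun x y => ?_⟩
  have hcount : {i | keyOrder (mcGarveyKey R (e i)) x y}.ncard =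
      ∑ v, if mcGarveyKey R v x < mcGarveyKey R v y then 1 else 0 :=
    ncard_setOf_comp_equiv e (fun v => mcGarveyKey R v x < mcGarveyKey R v y)
  rw [hcount]
  rcases eq_or_ne x y with rfl | hxy
  · simpa using fun h => hasym x x h h
  · have hvotes := mcGarveyKey_votes R hxy
    have hbase : (if x < y then 1 else 0) ≤ 1 := by split_ifs <;> omega
    rcases htotal x y hxy with h | h
    · simp only [h, hasym x y h, if_true, if_false] at hvotes
      simp only [h, iff_true]
      omega
    · simp only [h, hasym y x h, if_true, if_false] at hvotes
      simp only [hasym y x h, iff_false]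
      omega
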